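/- Let G be a finite simple connected graph. Define G^(0) = G and, for k ≥ 0, G^(k+1) = G^(k) − U_2(G^(k)), where U_2(H) = { v : deg_H(v) ≥ 2 and the minimum distance in H from v to the set of leaves of H equals 2 } and H − W denotes the induced subgraph on the complement of W. Suppose that for some m ≥ 0 the graph G^(m) is the disjoint union of star graphs S_1, …, S_r and graphs G_1, …, G_s in which every vertex has degree at least 2. Then deg h_G = α(G) if and only if I(G_j, −1) ≠ 0 for all j = 1, …, s. -/

import Mathlib

open Finset Polynomial

/-- Every subset of a finite type gets a `Fintype` instance (classically). -/
noncomputable instance fintypeOfSet {V : Type*} [Finite V] (s : Set V) : Fintype ↥s :=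
  Fintype.ofFinite _

/-- `s` is an independent set of the graph `G`: no two of its vertices are adjacent. -/
def IsIndepSet {V : Type*} (G : SimpleGraph V) (s : Finset V) : Prop :=
  ∀ u ∈ s, ∀ v ∈ s, ¬ G.Adj u v

/-- The finset of all independent sets of `G`. -/
noncomputable def indepFinsets {V : Type*} [Fintype V] (G : SimpleGraph V) :
    Finset (Finset V) :=
  @Finset.filter _ (fun s => IsIndepSet G s) (Classical.decPred _) Finset.univ

/-- `sCount G i` is the number of independent sets of size `i` in `G`. -/
noncomputable def sCount {V : Type*} [Fintype V] (G : SimpleGraph V) (i : ℕ) : ℕ :=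
  ((indepFinsets G).filter (fun s => s.card = i)).card

/-- The independence number `α(G)`: the maximum size of an independent set. -/
noncomputable def indepNum {V : Type*} [Fintype V] (G : SimpleGraph V) : ℕ :=
  (indepFinsets G).sup Finset.card

/-- The independence polynomial `I(G,t) = Σ_i s_i(G) t^i ∈ ℤ[t]`. -/
noncomputable def indepPoly {V : Type*} [Fintype V] (G : SimpleGraph V) : Polynomial ℤ :=
  ∑ i ∈ Finset.range (indepNum G + 1), Polynomial.C (sCount G i : ℤ) * Polynomial.X ^ i

/-- The h-polynomial of the edge ideal of `G`:
`h_G(t) = Σ_i s_i(G) t^i (1-t)^{α(G)-i} ∈ ℤ[t]`. -/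
noncomputable def hPoly {V : Type*} [Fintype V] (G : SimpleGraph V) : Polynomial ℤ :=
  ∑ i ∈ Finset.range (indepNum G + 1),
    Polynomial.C (sCount G i : ℤ) * Polynomial.X ^ i *
      (1 - Polynomial.X) ^ (indepNum G - i)

/-- The degree of a vertex in a finite simple graph. -/
noncomputable def deg {V : Type*} [Fintype V] (G : SimpleGraph V) (v : V) : ℕ :=
  (@Finset.filter _ (fun u => G.Adj v u) (Classical.decPred _) Finset.univ).card

/-- A leaf of `G` is a vertex of degree `1`. -/
def IsLeaf {V : Type*} [Fintype V] (G : SimpleGraph V) (v : V) : Prop :=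
  deg G v = 1

/-- The minimum graph distance from `v` to the set of leaves of `G` equals `2`
(unreachable leaves are at infinite distance, hence do not count). -/
def DistToLeavesEqTwo {V : Type*} [Fintype V] (G : SimpleGraph V) (v : V) : Prop :=
  (∃ u, IsLeaf G u ∧ G.Reachable v u ∧ G.dist v u = 2) ∧
  (∀ u, IsLeaf G u → G.Reachable v u → 2 ≤ G.dist v u)

/-- `U_2(G)`: the set of vertices of degree at least `2` whose minimum distance to the
set of leaves of `G` equals `2`. -/
def U2 {V : Type*} [Fintype V] (G : SimpleGraph V) : Set V :=
  {v | 2 ≤ deg G v ∧ DistToLeavesEqTwo G v}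

/-- The elimination process: `elimSet G 0` is the whole vertex set, and
`elimSet G (k+1)` is obtained from `elimSet G k` by deleting the vertices of
`U_2(G^{(k)})`, where `G^{(k)}` is the subgraph of `G` induced on `elimSet G k`. -/
noncomputable def elimSet {V : Type*} [Fintype V] (G : SimpleGraph V) : ℕ → Set V
  | 0 => Set.univ
  | k + 1 => elimSet G k \ (Subtype.val '' (U2 (G.induce (elimSet G k))))

/-- A (finite) graph is a star: some center vertex is adjacent to every other vertex,
every other vertex is a leaf, and there is at least one other vertex. -/
def IsStar {W : Type*} [Fintype W] (K : SimpleGraph W) : Prop :=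
  ∃ c : W, (∃ v : W, v ≠ c) ∧ (∀ v, v ≠ c → K.Adj c v) ∧ (∀ v, v ≠ c → deg K v = 1)

section ZLemmas

variable {V : Type*} [Fintype V]

/-- Independent subsets of `A` (with respect to `G`). -/
noncomputable def indepSubs (G : SimpleGraph V) (A : Finset V) : Finset (Finset V) :=
  @Finset.filter _ (fun t => IsIndepSet G t) (Classical.decPred _) A.powerset

/-- The signed count of independent subsets of `A`. -/
noncomputable def Zsum (G : SimpleGraph V) (A : Finset V) : ℤ :=
  ∑ t ∈ indepSubs G A, (-1 : ℤ) ^ t.card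

lemma mem_indepSubs {G : SimpleGraph V} {A t : Finset V} :
    t ∈ indepSubs G A ↔ t ⊆ A ∧ IsIndepSet G t := by
  simp [indepSubs, Finset.mem_filter, Finset.mem_powerset]

lemma IsIndepSet.subset {G : SimpleGraph V} {s t : Finset V} (h : IsIndepSet G t)
    (hst : s ⊆ t) : IsIndepSet G s := fun u hu v hv => h u (hst hu) v (hst hv)

lemma Zsum_erase [DecidableEq V] (G : SimpleGraph V) {A : Finset V} {v : V} (hv : v ∈ A)
    (hw : ∃ u w, u ∈ A ∧ w ∈ A ∧ G.Adj u w ∧ (∀ w' ∈ A, G.Adj u w' → w' = w) ∧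
      G.Adj w v ∧ ¬ G.Adj v u ∧ u ≠ v) :
    Zsum G A = Zsum G (A.erase v) := by
  classical
  obtain ⟨u, w, huA, hwA, huw, huniq, hwv, hnvu, hun⟩ := hw
  have hsplit := Finset.sum_filter_add_sum_filter_not (indepSubs G A) (fun t => v ∈ t)
    (fun t => (-1 : ℤ) ^ t.card)
  have h2 : (indepSubs G A).filter (fun t => v ∉ t) = indepSubs G (A.erase v) := by
    ext t
    simp only [Finset.mem_filter, mem_indepSubs]
    constructor
    · rintro ⟨⟨hsub, hind⟩, hvt⟩
      exact ⟨fun x hx => Finset.mem_erase.2 ⟨fun h => hvt (h ▸ hx), hsub hx⟩, hind⟩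
    · rintro ⟨hsub, hind⟩
      refine ⟨⟨fun x hx => Finset.mem_of_mem_erase (hsub hx), hind⟩, fun hvt => ?_⟩
      exact (Finset.mem_erase.1 (hsub hvt)).1 rfl
  have h1 : ∑ t ∈ (indepSubs G A).filter (fun t => v ∈ t), (-1 : ℤ) ^ t.card = 0 := by
    refine Finset.sum_involution
      (fun t _ => if u ∈ t then t.erase u else insert u t) ?_ ?_ ?_ ?_
    · intro t ht
      by_cases hu : u ∈ t
      · simp only [hu, if_true]
        rw [Finset.card_erase_of_mem hu]
        obtain ⟨n, hn⟩ := Nat.exists_eq_succ_of_ne_zero (Finset.card_ne_zero_of_mem hu)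
        rw [hn, Nat.succ_sub_one, pow_succ]
        ring
      · simp only [hu, if_false]
        rw [Finset.card_insert_of_notMem hu, pow_succ]
        ring
    · intro t ht _
      by_cases hu : u ∈ t
      · simp only [hu, if_true]
        intro h
        exact Finset.notMem_erase u t (h.symm ▸ hu)
      · simp only [hu, if_false]
        intro h
        exact hu (h ▸ Finset.mem_insert_self u t)
    · intro t ht
      simp only [Finset.mem_filter, mem_indepSubs] at ht ⊢
      obtain ⟨⟨hsub, hind⟩, hvt⟩ := ht
      have hwnt : w ∉ t := fun hwt => hind w hwt v hvt hwv
      by_cases hu : u ∈ t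
      · simp only [hu, if_true]
        exact ⟨⟨(Finset.erase_subset u t).trans hsub,
          hind.subset (Finset.erase_subset u t)⟩, Finset.mem_erase.2 ⟨Ne.symm hun, hvt⟩⟩
      · simp only [hu, if_false]
        refine ⟨⟨Finset.insert_subset huA hsub, ?_⟩, Finset.mem_insert_of_mem hvt⟩
        intro a ha b hb hab
        rcases Finset.mem_insert.1 ha with ha' | ha' <;>
          rcases Finset.mem_insert.1 hb with hb' | hb'
        · rw [ha', hb'] at hab
          exact G.loopless.irrefl u hab
        · rw [ha'] at hab
          have := huniq b (hsub hb') hab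
          rw [this] at hb'
          exact hwnt hb'
        · rw [hb'] at hab
          have := huniq a (hsub ha') hab.symm
          rw [this] at ha'
          exact hwnt ha'
        · exact hind a ha' b hb' hab
    · intro t ht
      by_cases hu : u ∈ t
      · simp [hu, Finset.insert_erase hu]
      · simp [hu, Finset.erase_insert hu]
  rw [Zsum, ← hsplit, h1, zero_add, h2, Zsum]

lemma Zsum_sdiff [DecidableEq V] (G : SimpleGraph V) (S : Finset V) :
    ∀ A : Finset V, S ⊆ A →
    (∀ v ∈ S, ∃ u w, u ∈ A ∧ u ∉ S ∧ w ∈ A ∧ w ∉ S ∧ G.Adj u w ∧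
      (∀ w' ∈ A, G.Adj u w' → w' = w) ∧ G.Adj w v ∧ ¬ G.Adj v u ∧ u ≠ v) →
    Zsum G A = Zsum G (A \ S) := by
  induction S using Finset.strongInduction with
  | _ S ih =>
    intro A hSA hwit
    rcases S.eq_empty_or_nonempty with rfl | ⟨v, hvS⟩
    · simp
    · have hvA := hSA hvS
      obtain ⟨u, w, huA, huS, hwA, hwS, huw, huniq, hwv, hnvu, hun⟩ := hwit v hvS
      have step : Zsum G A = Zsum G (A.erase v) :=
        Zsum_erase G hvA ⟨u, w, huA, hwA, huw, huniq, hwv, hnvu, hun⟩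
      have hrec := ih (S.erase v) (Finset.erase_ssubset hvS) (A.erase v)
        (fun x hx => Finset.mem_erase.2
          ⟨(Finset.mem_erase.1 hx).1, hSA (Finset.mem_of_mem_erase hx)⟩)
        ?_
      · rw [step, hrec]
        congr 1
        ext x
        simp only [Finset.mem_sdiff, Finset.mem_erase]
        constructor
        · rintro ⟨⟨hxv, hxA⟩, hxS⟩
          exact ⟨hxA, fun hxS' => hxS ⟨hxv, hxS'⟩⟩
        · rintro ⟨hxA, hxS⟩
          have hxv : x ≠ v := fun h => hxS (h ▸ hvS)
          exact ⟨⟨hxv, hxA⟩, fun h => hxS h.2⟩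
      · intro v' hv'
        obtain ⟨u', w', hu'A, hu'S, hw'A, hw'S, h1, h2, h3, h4, h5⟩ :=
          hwit v' (Finset.mem_of_mem_erase hv')
        have hu'v : u' ≠ v := fun h => hu'S (h ▸ hvS)
        have hw'v : w' ≠ v := fun h => hw'S (h ▸ hvS)
        exact ⟨u', w', Finset.mem_erase.2 ⟨hu'v, hu'A⟩,
          fun h => hu'S (Finset.mem_of_mem_erase h),
          Finset.mem_erase.2 ⟨hw'v, hw'A⟩,
          fun h => hw'S (Finset.mem_of_mem_erase h),
          h1, fun w'' hw'' => h2 w'' (Finset.mem_of_mem_erase hw''), h3, h4, h5⟩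

/-- Splitting: if there are no edges between `B` and `C` then `Zsum` multiplies. -/
lemma Zsum_union [DecidableEq V] (G : SimpleGraph V) {B C : Finset V}
    (hdisj : ∀ x ∈ B, x ∉ C) (hcross : ∀ x ∈ B, ∀ y ∈ C, ¬ G.Adj x y) :
    Zsum G (B ∪ C) = Zsum G B * Zsum G C := by
  classical
  rw [Zsum, Zsum, Zsum, Finset.sum_mul_sum]
  rw [← Finset.sum_product']
  refine Finset.sum_nbij' (fun t => (t ∩ B, t ∩ C)) (fun p => p.1 ∪ p.2) ?_ ?_ ?_ ?_ ?_
  · intro t ht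
    rw [mem_indepSubs] at ht
    obtain ⟨hsub, hind⟩ := ht
    simp only [Finset.mem_product, mem_indepSubs]
    exact ⟨⟨Finset.inter_subset_right, hind.subset Finset.inter_subset_left⟩,
      ⟨Finset.inter_subset_right, hind.subset Finset.inter_subset_left⟩⟩
  · intro p hp
    simp only [Finset.mem_product, mem_indepSubs] at hp
    obtain ⟨⟨h1, h2⟩, ⟨h3, h4⟩⟩ := hp
    rw [mem_indepSubs]
    refine ⟨Finset.union_subset (h1.trans Finset.subset_union_left)
      (h3.trans Finset.subset_union_right), ?_⟩
    intro a ha b hb hab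
    rcases Finset.mem_union.1 ha with ha' | ha' <;> rcases Finset.mem_union.1 hb with hb' | hb'
    · exact h2 a ha' b hb' hab
    · exact hcross a (h1 ha') b (h3 hb') hab
    · exact hcross b (h1 hb') a (h3 ha') hab.symm
    · exact h4 a ha' b hb' hab
  · intro t ht
    rw [mem_indepSubs] at ht
    dsimp only
    rw [← Finset.inter_union_distrib_left]
    exact (Finset.inter_eq_left.2 ht.1)
  · intro p hp
    simp only [Finset.mem_product, mem_indepSubs] at hp
    obtain ⟨⟨h1, _⟩, ⟨h3, _⟩⟩ := hp
    have e1 : p.1 ∩ B = p.1 := Finset.inter_eq_left.2 h1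
    have e2 : p.2 ∩ B = ∅ := by
      rw [Finset.eq_empty_iff_forall_notMem]
      intro x hx
      exact hdisj x (Finset.mem_inter.1 hx).2 (h3 (Finset.mem_inter.1 hx).1)
    have e3 : p.1 ∩ C = ∅ := by
      rw [Finset.eq_empty_iff_forall_notMem]
      intro x hx
      exact hdisj x (h1 (Finset.mem_inter.1 hx).1) (Finset.mem_inter.1 hx).2
    have e4 : p.2 ∩ C = p.2 := Finset.inter_eq_left.2 h3
    rw [Finset.union_inter_distrib_right, Finset.union_inter_distrib_right,
      e1, e2, e3, e4, Finset.union_empty, Finset.empty_union]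
  · intro t ht
    rw [mem_indepSubs] at ht
    have hd : Disjoint (t ∩ B) (t ∩ C) := by
      rw [Finset.disjoint_left]
      intro x hx1 hx2
      exact hdisj x (Finset.mem_inter.1 hx1).2 (Finset.mem_inter.1 hx2).2
    dsimp only
    rw [← pow_add, ← Finset.card_union_of_disjoint hd, ← Finset.inter_union_distrib_left,
      Finset.inter_eq_left.2 ht.1]

lemma card_le_indepNum {G : SimpleGraph V} {t : Finset V} (ht : t ∈ indepFinsets G) :
    t.card ≤ indepNum G := Finset.le_sup ht

lemma eval_indepPoly (G : SimpleGraph V) (x : ℤ) :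
    (indepPoly G).eval x = ∑ i ∈ Finset.range (indepNum G + 1), (sCount G i : ℤ) * x ^ i := by
  rw [indepPoly, Polynomial.eval_finset_sum]
  simp only [Polynomial.eval_mul, Polynomial.eval_C, Polynomial.eval_pow, Polynomial.eval_X]

lemma eval_indepPoly' (G : SimpleGraph V) (x : ℤ) :
    (indepPoly G).eval x = ∑ t ∈ indepFinsets G, x ^ t.card := by
  classical
  rw [eval_indepPoly]
  rw [← Finset.sum_fiberwise_of_maps_to (g := Finset.card)
    (fun t ht => Finset.mem_range.2 (Nat.lt_succ_of_le (card_le_indepNum ht)))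
    (fun t => x ^ t.card)]
  refine Finset.sum_congr rfl fun i _ => ?_
  have h1 : ∀ t ∈ (indepFinsets G).filter (fun t => t.card = i), x ^ t.card = x ^ i :=
    fun t ht => by rw [(Finset.mem_filter.1 ht).2]
  rw [Finset.sum_congr rfl h1, Finset.sum_const, sCount, nsmul_eq_mul]

lemma indepSubs_univ (G : SimpleGraph V) : indepSubs G Finset.univ = indepFinsets G := by
  rw [indepSubs, indepFinsets, Finset.powerset_univ]

lemma indepPoly_eval_neg_one (G : SimpleGraph V) :
    (indepPoly G).eval (-1) = Zsum G Finset.univ := by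
  rw [eval_indepPoly', Zsum, indepSubs_univ]

lemma Zsum_induce (G : SimpleGraph V) (s : Set V) :
    Zsum (G.induce s) Finset.univ = Zsum G s.toFinset := by
  classical
  rw [Zsum, Zsum]
  refine Finset.sum_nbij' (fun t => t.image Subtype.val) (fun B => B.subtype (· ∈ s))
    ?_ ?_ ?_ ?_ ?_
  · intro t ht
    rw [mem_indepSubs] at ht ⊢
    refine ⟨?_, ?_⟩
    · intro x hx
      obtain ⟨a, _, rfl⟩ := Finset.mem_image.1 hx
      exact Set.mem_toFinset.2 a.2
    · intro a ha b hb hab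
      obtain ⟨a', ha', rfl⟩ := Finset.mem_image.1 ha
      obtain ⟨b', hb', rfl⟩ := Finset.mem_image.1 hb
      exact ht.2 a' ha' b' hb' hab
  · intro B hB
    rw [mem_indepSubs] at hB ⊢
    refine ⟨Finset.subset_univ _, ?_⟩
    intro a ha b hb hab
    exact hB.2 a.val (Finset.mem_subtype.1 ha) b.val (Finset.mem_subtype.1 hb) hab
  · intro t _
    ext a
    simp only [Finset.mem_subtype, Finset.mem_image]
    constructor
    · rintro ⟨b, hb, hba⟩
      exact (Subtype.ext hba) ▸ hb
    · intro ha
      exact ⟨a, ha, rfl⟩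
  · intro B hB
    rw [mem_indepSubs] at hB
    ext x
    simp only [Finset.mem_image]
    constructor
    · rintro ⟨a, ha, rfl⟩
      exact Finset.mem_subtype.1 ha
    · intro hx
      exact ⟨⟨x, Set.mem_toFinset.1 (hB.1 hx)⟩, Finset.mem_subtype.2 hx, rfl⟩
  · intro t _
    rw [Finset.card_image_of_injective _ Subtype.val_injective]

lemma indepPoly_induce_eval (G : SimpleGraph V) (s : Set V) :
    (indepPoly (G.induce s)).eval (-1) = Zsum G s.toFinset := by
  rw [indepPoly_eval_neg_one, Zsum_induce]

lemma one_sub_X_pow_coeff (n : ℕ) : ((1 - Polynomial.X : Polynomial ℤ) ^ n).coeff n = (-1) ^ n := by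
  have h : (1 - Polynomial.X : Polynomial ℤ) = -(Polynomial.X - Polynomial.C 1) := by
    rw [Polynomial.C_1]; ring
  have hC : ((-1 : Polynomial ℤ)) = Polynomial.C (-1) := by simp
  rw [h, neg_pow, hC, ← map_pow, Polynomial.coeff_C_mul]
  have hdeg : ((Polynomial.X - Polynomial.C (1:ℤ)) ^ n).natDegree = n := by
    rw [Polynomial.natDegree_pow, Polynomial.natDegree_X_sub_C, mul_one]
  have hm : ((Polynomial.X - Polynomial.C (1:ℤ)) ^ n).coeff n = 1 := by
    have := ((Polynomial.monic_X_sub_C (1:ℤ)).pow n).coeff_natDegree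
    rwa [hdeg] at this
  rw [hm, mul_one]

lemma natDegree_hPoly_le (G : SimpleGraph V) : (hPoly G).natDegree ≤ indepNum G := by
  rw [hPoly]
  refine Polynomial.natDegree_sum_le_of_forall_le _ _ fun i hi => ?_
  have hil : i ≤ indepNum G := Nat.lt_succ_iff.1 (Finset.mem_range.1 hi)
  calc (Polynomial.C (sCount G i : ℤ) * Polynomial.X ^ i *
        (1 - Polynomial.X) ^ (indepNum G - i)).natDegree
      ≤ (Polynomial.C (sCount G i : ℤ) * Polynomial.X ^ i).natDegree +
        ((1 - Polynomial.X : Polynomial ℤ) ^ (indepNum G - i)).natDegree :=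
        Polynomial.natDegree_mul_le
    _ ≤ i + (indepNum G - i) := by
        gcongr
        · exact (Polynomial.natDegree_C_mul_le _ _).trans (by simp)
        · refine Polynomial.natDegree_pow_le.trans ?_
          have : (1 - Polynomial.X : Polynomial ℤ).natDegree ≤ 1 := by
            refine (Polynomial.natDegree_sub_le _ _).trans ?_
            simp
          calc (indepNum G - i) * (1 - Polynomial.X : Polynomial ℤ).natDegree
              ≤ (indepNum G - i) * 1 := by gcongr
            _ = indepNum G - i := mul_one _
    _ = indepNum G := Nat.add_sub_cancel' hil

lemma hPoly_coeff_top (G : SimpleGraph V) :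
    (hPoly G).coeff (indepNum G) =
      (-1) ^ (indepNum G) * (indepPoly G).eval (-1) := by
  rw [hPoly, Polynomial.finset_sum_coeff, eval_indepPoly, Finset.mul_sum]
  refine Finset.sum_congr rfl fun i hi => ?_
  have hil : i ≤ indepNum G := Nat.lt_succ_iff.1 (Finset.mem_range.1 hi)
  rw [mul_assoc, Polynomial.coeff_C_mul, Polynomial.coeff_X_pow_mul', if_pos hil,
    one_sub_X_pow_coeff]
  have key : ((-1 : ℤ)) ^ (indepNum G - i) = (-1) ^ indepNum G * (-1) ^ i := by
    have h1 : ((-1 : ℤ)) ^ (indepNum G - i) * (-1) ^ i = (-1) ^ indepNum G := by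
      rw [← pow_add, Nat.sub_add_cancel hil]
    have h2 : ((-1 : ℤ)) ^ i * (-1) ^ i = 1 := by
      rw [← pow_add]
      exact Even.neg_one_pow ⟨i, rfl⟩
    calc ((-1 : ℤ)) ^ (indepNum G - i)
        = (-1) ^ (indepNum G - i) * ((-1) ^ i * (-1) ^ i) := by rw [h2, mul_one]
      _ = ((-1) ^ (indepNum G - i) * (-1) ^ i) * (-1) ^ i := by ring
      _ = (-1) ^ indepNum G * (-1) ^ i := by rw [h1]
  rw [key]
  ring

lemma mem_indepFinsets {G : SimpleGraph V} {t : Finset V} :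
    t ∈ indepFinsets G ↔ IsIndepSet G t := by
  rw [← indepSubs_univ, mem_indepSubs]
  simp

lemma empty_mem_indepFinsets (G : SimpleGraph V) : ∅ ∈ indepFinsets G :=
  mem_indepFinsets.2 fun u hu => absurd hu (Finset.notMem_empty u)

lemma sCount_indepNum_pos (G : SimpleGraph V) : 0 < sCount G (indepNum G) := by
  classical
  obtain ⟨t, ht, hsup⟩ := Finset.exists_mem_eq_sup (indepFinsets G)
    ⟨∅, empty_mem_indepFinsets G⟩ Finset.card
  rw [sCount, Finset.card_pos]
  exact ⟨t, Finset.mem_filter.2 ⟨ht, hsup.symm⟩⟩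

lemma hPoly_eval_one (G : SimpleGraph V) :
    (hPoly G).eval 1 = (sCount G (indepNum G) : ℤ) := by
  rw [hPoly, Polynomial.eval_finset_sum]
  simp only [Polynomial.eval_mul, Polynomial.eval_C, Polynomial.eval_pow, Polynomial.eval_X,
    Polynomial.eval_sub, Polynomial.eval_one, sub_self, one_pow, mul_one]
  rw [Finset.sum_eq_single (indepNum G)]
  · simp
  · intro i hi hne
    have hil : i ≤ indepNum G := Nat.lt_succ_iff.1 (Finset.mem_range.1 hi)
    have : indepNum G - i ≠ 0 := by omega
    rw [zero_pow this, mul_zero]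
  · intro h
    exact absurd (Finset.self_mem_range_succ (indepNum G)) h

lemma hPoly_ne_zero (G : SimpleGraph V) : hPoly G ≠ 0 := by
  intro h
  have h1 := hPoly_eval_one G
  rw [h, Polynomial.eval_zero] at h1
  have := sCount_indepNum_pos G
  omega

lemma natDegree_hPoly_eq_iff (G : SimpleGraph V) :
    (hPoly G).natDegree = indepNum G ↔ (indepPoly G).eval (-1) ≠ 0 := by
  constructor
  · intro h h0
    have hco := hPoly_coeff_top G
    rw [h0, mul_zero] at hco
    have hlc : (hPoly G).leadingCoeff ≠ 0 := Polynomial.leadingCoeff_ne_zero.2 (hPoly_ne_zero G)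
    rw [Polynomial.leadingCoeff, h] at hlc
    exact hlc hco
  · intro h
    refine le_antisymm (natDegree_hPoly_le G) (Polynomial.le_natDegree_of_ne_zero ?_)
    rw [hPoly_coeff_top G]
    exact mul_ne_zero (pow_ne_zero _ (by norm_num)) h

lemma Zsum_star (K : SimpleGraph V) (h : IsStar K) : Zsum K Finset.univ = -1 := by
  classical
  obtain ⟨c, ⟨v0, hv0⟩, hadj, hdeg⟩ := h
  have hsplit := Finset.sum_filter_add_sum_filter_not (indepSubs K Finset.univ)
    (fun t => c ∈ t) (fun t => (-1 : ℤ) ^ t.card)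
  have h1 : (indepSubs K Finset.univ).filter (fun t => c ∈ t) = {{c}} := by
    ext t
    simp only [Finset.mem_filter, mem_indepSubs, Finset.mem_singleton]
    constructor
    · rintro ⟨⟨_, hind⟩, hct⟩
      ext x
      simp only [Finset.mem_singleton]
      constructor
      · intro hx
        by_contra hxc
        exact hind c hct x hx (hadj x hxc)
      · rintro rfl; exact hct
    · rintro rfl
      refine ⟨⟨Finset.subset_univ _, ?_⟩, Finset.mem_singleton_self c⟩
      intro a ha b hb hab
      rw [Finset.mem_singleton] at ha hb
      rw [ha, hb] at hab
      exact K.loopless.irrefl c hab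
  have h2 : (indepSubs K Finset.univ).filter (fun t => c ∉ t) =
      (Finset.univ.erase c).powerset := by
    ext t
    simp only [Finset.mem_filter, mem_indepSubs, Finset.mem_powerset]
    constructor
    · rintro ⟨⟨_, _⟩, hct⟩
      intro x hx
      rw [Finset.mem_erase]
      exact ⟨fun hxy => hct (hxy ▸ hx), Finset.mem_univ x⟩
    · intro hsub
      have hct : c ∉ t := fun hc => (Finset.mem_erase.1 (hsub hc)).1 rfl
      refine ⟨⟨Finset.subset_univ _, ?_⟩, hct⟩
      intro a ha b hb hab
      have hac : a ≠ c := (Finset.mem_erase.1 (hsub ha)).1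
      have hbc : b ≠ c := (Finset.mem_erase.1 (hsub hb)).1
      have h2le : 2 ≤ deg K a := by
        have hsub2 : ({c, b} : Finset V) ⊆
            @Finset.filter _ (fun u => K.Adj a u) (Classical.decPred _) Finset.univ := by
          intro x hx
          rcases Finset.mem_insert.1 hx with rfl | hx
          · exact Finset.mem_filter.2 ⟨Finset.mem_univ _, (hadj a hac).symm⟩
          · rw [Finset.mem_singleton] at hx
            exact Finset.mem_filter.2 ⟨Finset.mem_univ _, hx ▸ hab⟩
        have hcard : ({c, b} : Finset V).card = 2 := by
          rw [Finset.card_insert_of_notMem (by simp [Ne.symm hbc]), Finset.card_singleton]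
        calc 2 = ({c, b} : Finset V).card := hcard.symm
          _ ≤ _ := Finset.card_le_card hsub2
      rw [hdeg a hac] at h2le
      omega
  have h3 : ∑ t ∈ (Finset.univ.erase c).powerset, (-1 : ℤ) ^ t.card = 0 := by
    have hne : (Finset.univ.erase c).Nonempty :=
      ⟨v0, Finset.mem_erase.2 ⟨hv0, Finset.mem_univ _⟩⟩
    exact Finset.sum_powerset_neg_one_pow_card_of_nonempty hne
  rw [Zsum, ← hsplit, h1, h2, h3, add_zero, Finset.sum_singleton, Finset.card_singleton,
    pow_one]

lemma Zsum_biUnion_components [DecidableEq V] (H : SimpleGraph V)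
    (T : Finset H.ConnectedComponent) :
    Zsum H (T.biUnion fun c => c.supp.toFinset) = ∏ c ∈ T, Zsum H c.supp.toFinset := by
  classical
  induction T using Finset.induction with
  | empty =>
    simp only [Finset.biUnion_empty, Finset.prod_empty]
    rw [Zsum]
    have : indepSubs H ∅ = {∅} := by
      ext t
      rw [mem_indepSubs]
      simp only [Finset.subset_empty, Finset.mem_singleton]
      constructor
      · rintro ⟨rfl, _⟩; rfl
      · rintro rfl
        exact ⟨rfl, fun u hu => absurd hu (Finset.notMem_empty u)⟩
    rw [this, Finset.sum_singleton, Finset.card_empty, pow_zero]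
  | insert c T hc ih =>
    rw [Finset.biUnion_insert, Finset.prod_insert hc, ← ih]
    refine Zsum_union H ?_ ?_
    · intro x hx hx2
      rw [Set.mem_toFinset, SimpleGraph.ConnectedComponent.mem_supp_iff] at hx
      obtain ⟨c', hc', hx2'⟩ := Finset.mem_biUnion.1 hx2
      rw [Set.mem_toFinset, SimpleGraph.ConnectedComponent.mem_supp_iff] at hx2'
      exact hc (hx ▸ hx2' ▸ hc')
    · intro x hx y hy hadj
      rw [Set.mem_toFinset, SimpleGraph.ConnectedComponent.mem_supp_iff] at hx
      obtain ⟨c', hc', hy'⟩ := Finset.mem_biUnion.1 hy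
      rw [Set.mem_toFinset, SimpleGraph.ConnectedComponent.mem_supp_iff] at hy'
      have := SimpleGraph.ConnectedComponent.connectedComponentMk_eq_of_adj hadj
      rw [hx, hy'] at this
      exact hc (this ▸ hc')

lemma Zsum_univ_eq_prod [DecidableEq V] (H : SimpleGraph V)
    [Fintype H.ConnectedComponent] :
    Zsum H Finset.univ = ∏ c : H.ConnectedComponent, Zsum H c.supp.toFinset := by
  rw [← Zsum_biUnion_components H Finset.univ]
  congr 1
  ext x
  constructor
  · intro _
    exact Finset.mem_biUnion.2 ⟨H.connectedComponentMk x, Finset.mem_univ _,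
      Set.mem_toFinset.2 ((SimpleGraph.ConnectedComponent.mem_supp_iff _ _).2 rfl)⟩
  · intro _
    exact Finset.mem_univ x

lemma U2_witness (G : SimpleGraph V) (s : Set V) (v : ↥s) (hU : v ∈ U2 (G.induce s)) :
    ∃ u w : ↥s, G.Adj ↑u ↑w ∧ (∀ w' ∈ s.toFinset, G.Adj ↑u w' → w' = ↑w) ∧ G.Adj ↑w ↑v ∧
      ¬ G.Adj ↑v ↑u ∧ (u : V) ≠ ↑v ∧ u ∉ U2 (G.induce s) ∧ w ∉ U2 (G.induce s) := by
  classical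
  set H := G.induce s with hH
  obtain ⟨hdeg2, ⟨u, hleaf, hreach, hdist⟩, hmin⟩ := hU
  obtain ⟨p, hp⟩ := hreach.exists_walk_length_eq_dist
  rw [hdist] at hp
  cases p with
  | nil => simp at hp
  | cons h q =>
    rename_i b
    cases q with
    | nil => simp at hp
    | cons h' q' =>
      rename_i b'
      cases q' with
      | cons h'' q'' =>
        simp [SimpleGraph.Walk.length_cons] at hp
      | nil =>
        -- h : H.Adj v b, h' : H.Adj b u
        have hvu_ne : u ≠ v := by
          intro h0
          rw [h0, SimpleGraph.dist_self] at hdist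
          omega
        have hnadj : ¬ H.Adj v u := by
          intro hadj
          rw [SimpleGraph.dist_eq_one_iff_adj.2 hadj] at hdist
          omega
        obtain ⟨a, ha⟩ := Finset.card_eq_one.1 hleaf
        have hba : b = a := by
          have : b ∈ @Finset.filter _ (fun x => H.Adj u x) (Classical.decPred _)
              Finset.univ := Finset.mem_filter.2 ⟨Finset.mem_univ _, h'.symm⟩
          rw [ha, Finset.mem_singleton] at this
          exact this
        refine ⟨u, b, ?_, ?_, ?_, ?_, ?_, ?_, ?_⟩
        · exact h'.symm
        · intro w' hw' hadj2
          rw [Set.mem_toFinset] at hw'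
          have : (⟨w', hw'⟩ : ↥s) ∈ @Finset.filter _ (fun x => H.Adj u x)
              (Classical.decPred _) Finset.univ :=
            Finset.mem_filter.2 ⟨Finset.mem_univ _, hadj2⟩
          rw [ha, Finset.mem_singleton] at this
          rw [hba]
          exact congrArg Subtype.val this
        · exact h.symm
        · exact fun hadj => hnadj hadj
        · exact fun h0 => hvu_ne (Subtype.ext h0)
        · intro hu
          obtain ⟨hdu, _⟩ := hu
          rw [hleaf] at hdu
          omega
        · intro hb
          obtain ⟨_, _, hminb⟩ := hb
          have := hminb u hleaf h'.reachable
          rw [SimpleGraph.dist_eq_one_iff_adj.2 h'] at this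
          omega

lemma Zsum_elimSet (G : SimpleGraph V) (m : ℕ) :
    Zsum G Finset.univ = Zsum G (elimSet G m).toFinset := by
  classical
  induction m with
  | zero =>
    congr 1
    ext x
    simp [Set.mem_toFinset, elimSet]
    exact (@Set.mem_toFinset _ _ (fintypeOfSet _) _).2 (Set.mem_univ x)
  | succ k ih =>
    rw [ih]
    have hstep : (elimSet G (k+1)).toFinset =
        (elimSet G k).toFinset \ (Subtype.val '' (U2 (G.induce (elimSet G k)))).toFinset := by
      ext x
      simp only [Set.mem_toFinset, Finset.mem_sdiff, elimSet, Set.mem_diff]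
      exact @Set.mem_toFinset _ _ (fintypeOfSet _) _
    rw [hstep]
    set s := elimSet G k with hs
    set S := (Subtype.val '' (U2 (G.induce s))).toFinset with hS
    refine Zsum_sdiff G S s.toFinset ?_ ?_
    · intro x hx
      rw [hS, Set.mem_toFinset] at hx
      obtain ⟨xx, _, rfl⟩ := hx
      exact Set.mem_toFinset.2 xx.2
    · intro v hvS
      rw [hS, Set.mem_toFinset] at hvS
      obtain ⟨vv, hvU, rfl⟩ := hvS
      obtain ⟨u, w, h1, h2, h3, h4, h5, h6, h7⟩ := U2_witness G s vv hvU
      refine ⟨↑u, ↑w, Set.mem_toFinset.2 u.2, ?_, Set.mem_toFinset.2 w.2, ?_,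
        h1, h2, h3, h4, h5⟩
      · intro hu
        rw [hS, Set.mem_toFinset] at hu
        obtain ⟨uu, huU, hval⟩ := hu
        exact h6 ((Subtype.val_injective hval) ▸ huU)
      · intro hw
        rw [hS, Set.mem_toFinset] at hw
        obtain ⟨ww, hwU, hval⟩ := hw
        exact h7 ((Subtype.val_injective hval) ▸ hwU)

end ZLemmas

/-- Let `G` be connected and suppose that at some stage `m` the
elimination process produces a graph `G^(m)` all of whose connected components are either
stars or graphs in which every vertex has degree at least `2`.  Then `deg h_G = α(G)` iff
`I(G_j,-1) ≠ 0` for each component `G_j` of minimum degree at least `2`. -/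
theorem degree_hPoly_eq_indepNum_iff_elimination {V : Type*} [Fintype V] (G : SimpleGraph V)
    (hconn : G.Connected) (m : ℕ)
    (hdecomp : ∀ c : (G.induce (elimSet G m)).ConnectedComponent,
      IsStar ((G.induce (elimSet G m)).induce c.supp) ∨
        ∀ v ∈ c.supp, 2 ≤ deg (G.induce (elimSet G m)) v) :
    (hPoly G).natDegree = indepNum G ↔
      ∀ c : (G.induce (elimSet G m)).ConnectedComponent,
        (∀ v ∈ c.supp, 2 ≤ deg (G.induce (elimSet G m)) v) →
        (indepPoly ((G.induce (elimSet G m)).induce c.supp)).eval (-1) ≠ 0 := by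
  classical
  rw [natDegree_hPoly_eq_iff G, indepPoly_eval_neg_one G, Zsum_elimSet G m,
    ← Zsum_induce G (elimSet G m)]
  letI : Fintype (G.induce (elimSet G m)).ConnectedComponent := Fintype.ofFinite _
  rw [Zsum_univ_eq_prod (G.induce (elimSet G m)), Finset.prod_ne_zero_iff]
  constructor
  · intro h c hc
    rw [indepPoly_induce_eval]
    exact h c (Finset.mem_univ c)
  · intro h c _
    rcases hdecomp c with hstar | hmin
    · have hz := Zsum_star _ hstar
      rw [← Zsum_induce (G.induce (elimSet G m)) c.supp, hz]
      norm_num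
    · have hne := h c hmin
      rwa [indepPoly_induce_eval] at hne
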